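/- Let μ be a non-zero Radon measure on ℝⁿ with support Γ and let d : Γ → [0,∞) satisfy 𝔻̄^{d(x)} μ(x) < ∞ for every x ∈ Γ. Then for every x ∈ Γ there exists r(x) > 0 such that every y ∈ Γ ∩ B(x,r(x)) with D̄^{d(y)} μ(y) > 0 satisfies d(y) ≥ d(x). In particular, the restriction of d to the set {x ∈ Γ : D̄^{d(x)} μ(x) > 0} is lower semicontinuous. -/

import Mathlib

open MeasureTheory Metric Filter Topology ENNReal

/-- The topological support of a Borel measure on `ℝⁿ`. -/
def msupport {n : ℕ} (μ : Measure (EuclideanSpace ℝ (Fin n))) :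
    Set (EuclideanSpace ℝ (Fin n)) :=
  {x | ∀ r : ℝ, 0 < r → 0 < μ (ball x r)}

/-- The upper `d`-density of a measure `μ` at `x`. -/
noncomputable def upperDensity {n : ℕ} (μ : Measure (EuclideanSpace ℝ (Fin n))) (d : ℝ)
    (x : EuclideanSpace ℝ (Fin n)) : ℝ≥0∞ :=
  Filter.limsup (fun r : ℝ => μ (ball x r) / ENNReal.ofReal (r ^ d)) (𝓝[>] (0 : ℝ))

/-- The locally uniform upper `d`-density of `μ` at `x`. -/
noncomputable def unifUpperDensity {n : ℕ} (μ : Measure (EuclideanSpace ℝ (Fin n))) (d : ℝ)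
    (x : EuclideanSpace ℝ (Fin n)) : ℝ≥0∞ :=
  ⨅ (r : ℝ) (_ : 0 < r),
    ⨆ (y : EuclideanSpace ℝ (Fin n)) (_ : y ∈ ball x r) (ϱ : ℝ) (_ : 0 < ϱ) (_ : ϱ ≤ r),
      μ (ball y ϱ) / ENNReal.ofReal (ϱ ^ d)

/-!
Finiteness of the locally uniform upper `d(x)`-density at `x` gives `μ(B(y,ϱ)) ≤ C ϱ^{d(x)}`
uniformly for `y` near `x` and small `ϱ`. For such `y` with `d(y) < d(x)` the ratio
`μ(B(y,ϱ)) / ϱ^{d(y)}` is then at most `C ϱ^{d(x) - d(y)} → 0`, so the upper `d(y)`-density vanishes.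
-/

section Density

variable {n : ℕ} {μ : Measure (EuclideanSpace ℝ (Fin n))}

theorem exists_measure_ball_le_of_unifUpperDensity_ne_top {s : ℝ}
    {x : EuclideanSpace ℝ (Fin n)} (h : unifUpperDensity μ s x ≠ ⊤) :
    ∃ r > (0 : ℝ), ∃ C ≠ ⊤, ∀ y ∈ ball x r, ∀ ϱ : ℝ, 0 < ϱ → ϱ ≤ r →
      μ (ball y ϱ) ≤ C * ENNReal.ofReal (ϱ ^ s) := by
  simp only [unifUpperDensity, ne_eq, iInf_eq_top, not_forall] at h
  obtain ⟨r, hr, hC⟩ := h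
  refine ⟨r, hr, _, hC, fun y hy ϱ hϱ hϱr => ?_⟩
  have hne : ENNReal.ofReal (ϱ ^ s) ≠ 0 := (ENNReal.ofReal_pos.2 (Real.rpow_pos_of_pos hϱ _)).ne'
  rw [← ENNReal.div_le_iff_le_mul (Or.inl hne) (Or.inl ENNReal.ofReal_ne_top)]
  exact le_iSup₂_of_le y hy (le_iSup₂_of_le ϱ hϱ (le_iSup_of_le hϱr le_rfl))

theorem tendsto_const_mul_ofReal_rpow_nhdsGT_zero {C : ℝ≥0∞} (hC : C ≠ ⊤) {e : ℝ}
    (he : 0 < e) :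
    Tendsto (fun ϱ : ℝ => C * ENNReal.ofReal (ϱ ^ e)) (𝓝[>] 0) (𝓝 0) := by
  have hrpow : Tendsto (fun ϱ : ℝ => ϱ ^ e) (𝓝[>] 0) (𝓝 0) := by
    simpa [Real.zero_rpow he.ne'] using
      (Real.continuousAt_rpow_const 0 e (Or.inr he.le)).tendsto.mono_left nhdsWithin_le_nhds
  simpa using ENNReal.Tendsto.const_mul (ENNReal.tendsto_ofReal hrpow) (Or.inr hC)

theorem upperDensity_eq_zero_of_measure_ball_le {y : EuclideanSpace ℝ (Fin n)} {s t r : ℝ}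
    {C : ℝ≥0∞} (hC : C ≠ ⊤) (hts : t < s) (hr : 0 < r)
    (hbound : ∀ ϱ : ℝ, 0 < ϱ → ϱ ≤ r → μ (ball y ϱ) ≤ C * ENNReal.ofReal (ϱ ^ s)) :
    upperDensity μ t y = 0 := by
  refine Tendsto.limsup_eq <| tendsto_of_tendsto_of_tendsto_of_le_of_le' tendsto_const_nhds
    (tendsto_const_mul_ofReal_rpow_nhdsGT_zero hC (sub_pos.2 hts))
    (Eventually.of_forall fun _ => zero_le) ?_
  filter_upwards [Ioo_mem_nhdsGT hr] with ϱ ⟨hϱ, hϱr⟩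
  have hsplit : ENNReal.ofReal (ϱ ^ s)
      = ENNReal.ofReal (ϱ ^ (s - t)) * ENNReal.ofReal (ϱ ^ t) := by
    rw [← ENNReal.ofReal_mul (Real.rpow_nonneg hϱ.le _), ← Real.rpow_add hϱ, sub_add_cancel]
  have hne : ENNReal.ofReal (ϱ ^ t) ≠ 0 := (ENNReal.ofReal_pos.2 (Real.rpow_pos_of_pos hϱ _)).ne'
  rw [ENNReal.div_le_iff_le_mul (Or.inl hne) (Or.inl ENNReal.ofReal_ne_top), mul_assoc,
    ← hsplit]
  exact hbound ϱ hϱ hϱr.le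

theorem exists_forall_le_of_unifUpperDensity_ne_top {d : EuclideanSpace ℝ (Fin n) → ℝ}
    {x : EuclideanSpace ℝ (Fin n)} (h : unifUpperDensity μ (d x) x ≠ ⊤) :
    ∃ r > (0 : ℝ), ∀ y ∈ ball x r, 0 < upperDensity μ (d y) y → d x ≤ d y := by
  obtain ⟨r, hr, C, hC, hbound⟩ := exists_measure_ball_le_of_unifUpperDensity_ne_top h
  refine ⟨r, hr, fun y hy hpos => le_of_not_gt fun hlt => hpos.ne' ?_⟩
  exact upperDensity_eq_zero_of_measure_ball_le hC hlt hr (hbound y hy)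

end Density

theorem lowerSemicontinuousOn_of_eventually_le {α : Type*} [TopologicalSpace α] {f : α → ℝ}
    {s : Set α} (h : ∀ x ∈ s, ∀ᶠ y in 𝓝[s] x, f x ≤ f y) : LowerSemicontinuousOn f s :=
  fun x hx _ hc => (h x hx).mono fun _ hy => hc.trans_le hy

theorem stmt4_general {n : ℕ} (μ : Measure (EuclideanSpace ℝ (Fin n)))
    (d : EuclideanSpace ℝ (Fin n) → ℝ)
    (hfin : ∀ x ∈ msupport μ, unifUpperDensity μ (d x) x ≠ ⊤) :
    (∀ x ∈ msupport μ, ∃ r > (0 : ℝ), ∀ y ∈ msupport μ ∩ ball x r,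
        0 < upperDensity μ (d y) y → d x ≤ d y) ∧
      LowerSemicontinuousOn d {x | x ∈ msupport μ ∧ 0 < upperDensity μ (d x) x} := by
  have hlocal : ∀ x ∈ msupport μ, ∃ r > (0 : ℝ), ∀ y ∈ ball x r,
      0 < upperDensity μ (d y) y → d x ≤ d y :=
    fun x hx => exists_forall_le_of_unifUpperDensity_ne_top (hfin x hx)
  refine ⟨fun x hx => ?_, lowerSemicontinuousOn_of_eventually_le fun x hx => ?_⟩
  · obtain ⟨r, hr, h⟩ := hlocal x hx
    exact ⟨r, hr, fun y hy => h y hy.2⟩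
  · obtain ⟨r, hr, h⟩ := hlocal x hx.1
    filter_upwards [nhdsWithin_le_nhds (ball_mem_nhds x hr), self_mem_nhdsWithin] with y hy hys
    exact h y hy hys.2

/-- under finiteness of the locally uniform upper densities, for every
`x ∈ Γ` there is `r(x) > 0` such that every `y ∈ Γ ∩ B(x,r(x))` with positive upper
`d(y)`-density satisfies `d(y) ≥ d(x)`; in particular `d` is lower semicontinuous on the
set of points of `Γ` with positive upper density. -/
theorem stmt4 {n : ℕ} (μ : Measure (EuclideanSpace ℝ (Fin n))) [IsFiniteMeasureOnCompacts μ]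
    (hμ : μ ≠ 0) (d : EuclideanSpace ℝ (Fin n) → ℝ)
    (hd0 : ∀ x ∈ msupport μ, 0 ≤ d x)
    (hfin : ∀ x ∈ msupport μ, unifUpperDensity μ (d x) x ≠ ⊤) :
    (∀ x ∈ msupport μ, ∃ r > (0 : ℝ), ∀ y ∈ msupport μ ∩ ball x r,
        0 < upperDensity μ (d y) y → d x ≤ d y) ∧
      LowerSemicontinuousOn d {x | x ∈ msupport μ ∧ 0 < upperDensity μ (d x) x} :=
  stmt4_general μ d hfin
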